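/- arXiv:2509.11463 — 3 statements merged into one kernel-verified Lean document; each statement's English description precedes it below -/
import Mathlib

section
/- Fix n ≥ 2. Then Ξ_λ = O(λ^{n−1} log λ) as λ → ∞; in particular Ξ_λ/λ^n → 0 as λ → ∞. -/
/-
Bounding each binomial coefficient `C(a, b)` by `a ^ b`, the `k`-th term of the first sum is at
most `((n - 1) λ) ^ (n - 1) / (k + 1)` and that of the second at most `((n - 1) λ) ^ (n - 1) / k`,
so `Ξ_λ ≤ 2 ((n - 1) λ) ^ (n - 1) H_⌊λ⌋ ≤ 2 ((n - 1) λ) ^ (n - 1) (1 + log λ)`, where `H` denotes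
the harmonic numbers. Since `λ ^ (n - 1) log λ = o(λ ^ n)`, the limit follows.
-/

noncomputable section

open Filter Asymptotics

/-- `Ξ_λ` from the paper. -/
def Xi (n : ℕ) (lam : ℝ) : ℕ :=
  (∑ k ∈ Finset.range (⌊lam⌋₊ + 2 - n),
    Nat.choose (k + n - 2) (n - 2) *
      Nat.choose (⌊lam / ((k : ℝ) + n - 1)⌋₊ + n - 2) (n - 1)) +
  ∑ k ∈ Finset.Icc 1 ⌊lam / ((n : ℝ) - 1)⌋₊,
    Nat.choose (k + n - 2) (n - 2) * Nat.choose ⌊lam / (k : ℝ)⌋₊ (n - 1)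

open Finset Real

lemma harmonic_mono : Monotone harmonic :=
  monotone_nat_of_le_succ fun n => by
    rw [harmonic_succ]
    exact le_add_of_nonneg_right (by positivity)

lemma Nat.cast_choose_le_pow {a b : ℕ} {x : ℝ} (h : (a : ℝ) ≤ x) : (a.choose b : ℝ) ≤ x ^ b :=
  calc (a.choose b : ℝ) ≤ (a : ℝ) ^ b := by exact_mod_cast Nat.choose_le_pow a b
    _ ≤ x ^ b := pow_le_pow_left₀ (Nat.cast_nonneg a) h b

lemma Xi_first_term_le {n k : ℕ} {lam : ℝ} (hn : 2 ≤ n) (hk : (k : ℝ) + n - 1 ≤ lam) :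
    (((k + n - 2).choose (n - 2) * (⌊lam / ((k : ℝ) + n - 1)⌋₊ + n - 2).choose (n - 1) : ℕ) : ℝ)
      ≤ (((n : ℝ) - 1) * lam) ^ (n - 1) / ((k : ℝ) + 1) := by
  obtain ⟨m, rfl⟩ := Nat.exists_eq_add_of_le' hn
  set d : ℝ := k + ↑(m + 2) - 1 with hd
  push_cast at hd ⊢
  simp only [Nat.add_sub_cancel, ← add_assoc]
  have hd1 : (k : ℝ) + 1 ≤ d := by rw [hd]; linarith [(m.cast_nonneg : (0 : ℝ) ≤ m)]
  have hd0 : 0 < d := by linarith [(k.cast_nonneg : (0 : ℝ) ≤ k)]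
  have hq : 1 ≤ lam / d := (one_le_div hd0).2 hk
  have hlam : 0 < lam := hd0.trans_le hk
  have hA : ((k + m).choose m : ℝ) ≤ d ^ m := Nat.cast_choose_le_pow (by push_cast; linarith)
  have hB : ((⌊lam / d⌋₊ + m).choose (m + 1) : ℝ) ≤ ((m + 1) * (lam / d)) ^ (m + 1) :=
    Nat.cast_choose_le_pow (by
      push_cast; nlinarith [Nat.floor_le (zero_le_one.trans hq), (m.cast_nonneg : (0 : ℝ) ≤ m)])
  calc ((k + m).choose m : ℝ) * ((⌊lam / d⌋₊ + m).choose (m + 1) : ℝ)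
      ≤ d ^ m * ((m + 1) * (lam / d)) ^ (m + 1) := by gcongr
    _ = ((m + 1) * lam) ^ (m + 1) / d := by rw [← mul_div_assoc, div_pow, pow_succ d]; field_simp
    _ ≤ ((m + 2 - 1) * lam) ^ (m + 1) / (k + 1) := by
      rw [show (m : ℝ) + 2 - 1 = m + 1 by ring]; gcongr

lemma Xi_second_term_le {n k : ℕ} {lam : ℝ} (hn : 2 ≤ n) (hk : 1 ≤ k) (hlam : 0 ≤ lam) :
    (((k + n - 2).choose (n - 2) * (⌊lam / (k : ℝ)⌋₊).choose (n - 1) : ℕ) : ℝ)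
      ≤ (((n : ℝ) - 1) * lam) ^ (n - 1) / k := by
  obtain ⟨m, rfl⟩ := Nat.exists_eq_add_of_le' hn
  push_cast
  simp only [Nat.add_sub_cancel, ← add_assoc]
  have hk1 : (1 : ℝ) ≤ k := by exact_mod_cast hk
  have hm : (0 : ℝ) ≤ m := m.cast_nonneg
  have hA : ((k + m).choose m : ℝ) ≤ ((m + 1) * k) ^ m :=
    Nat.cast_choose_le_pow (by push_cast; nlinarith)
  have hB : ((⌊lam / k⌋₊).choose (m + 1) : ℝ) ≤ (lam / k) ^ (m + 1) :=
    Nat.cast_choose_le_pow (Nat.floor_le (by positivity))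
  calc ((k + m).choose m : ℝ) * ((⌊lam / k⌋₊).choose (m + 1) : ℝ)
      ≤ ((m + 1) * k) ^ m * (lam / k) ^ (m + 1) := by gcongr
    _ = (m + 1) ^ m * lam ^ (m + 1) / k := by
      rw [div_pow, mul_pow, pow_succ (k : ℝ)]; field_simp
    _ ≤ ((m + 2 - 1) * lam) ^ (m + 1) / k := by
      rw [show (m : ℝ) + 2 - 1 = m + 1 by ring, mul_pow]
      gcongr
      · linarith
      · exact Nat.le_succ m

lemma cast_harmonic_eq_sum_range (N : ℕ) :
    (harmonic N : ℝ) = ∑ k ∈ range N, ((k : ℝ) + 1)⁻¹ := by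
  simp [harmonic]

lemma Xi_le_harmonic {n : ℕ} (hn : 2 ≤ n) {lam : ℝ} (hlam : 0 ≤ lam) :
    (Xi n lam : ℝ) ≤ 2 * (((n : ℝ) - 1) * lam) ^ (n - 1) * harmonic ⌊lam⌋₊ := by
  set C := (((n : ℝ) - 1) * lam) ^ (n - 1)
  have hn1 : (1 : ℝ) ≤ n - 1 := by
    have : (2 : ℝ) ≤ n := by exact_mod_cast hn
    linarith
  have hmono {N : ℕ} (hN : N ≤ ⌊lam⌋₊) : C * (harmonic N : ℝ) ≤ C * harmonic ⌊lam⌋₊ := by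
    gcongr; exact_mod_cast harmonic_mono hN
  have hfirst : (∑ k ∈ range (⌊lam⌋₊ + 2 - n),
      (((k + n - 2).choose (n - 2) *
        (⌊lam / ((k : ℝ) + n - 1)⌋₊ + n - 2).choose (n - 1) : ℕ) : ℝ))
      ≤ C * harmonic ⌊lam⌋₊ := by
    refine le_trans ?_ (hmono (by omega : ⌊lam⌋₊ + 2 - n ≤ ⌊lam⌋₊))
    rw [cast_harmonic_eq_sum_range, mul_sum]
    refine sum_le_sum fun k hk => ?_
    rw [← div_eq_mul_inv]
    refine Xi_first_term_le hn ?_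
    have hkn : ((k + n : ℕ) : ℝ) ≤ ⌊lam⌋₊ + 1 := by
      exact_mod_cast (by have := mem_range.1 hk; omega : k + n ≤ ⌊lam⌋₊ + 1)
    push_cast at hkn
    linarith [Nat.floor_le hlam]
  have hsecond : (∑ k ∈ Icc 1 ⌊lam / ((n : ℝ) - 1)⌋₊,
      (((k + n - 2).choose (n - 2) * (⌊lam / (k : ℝ)⌋₊).choose (n - 1) : ℕ) : ℝ))
      ≤ C * harmonic ⌊lam⌋₊ := by
    refine le_trans ?_ (hmono (Nat.floor_le_floor (div_le_self hlam hn1)))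
    simp only [harmonic_eq_sum_Icc, Rat.cast_sum, Rat.cast_inv, Rat.cast_natCast, mul_sum]
    refine sum_le_sum fun k hk => ?_
    rw [← div_eq_mul_inv]
    exact Xi_second_term_le hn (mem_Icc.1 hk).1 hlam
  calc (Xi n lam : ℝ) = _ + _ := by rw [Xi]; push_cast; rfl
    _ ≤ C * harmonic ⌊lam⌋₊ + C * harmonic ⌊lam⌋₊ := add_le_add hfirst hsecond
    _ = _ := by ring

lemma isLittleO_pow_mul_log_pow_succ (m : ℕ) :
    (fun x : ℝ => x ^ m * log x) =o[atTop] fun x => x ^ (m + 1) := by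
  simpa [pow_succ] using
    (isBigO_refl (fun x : ℝ => x ^ m) atTop).mul_isLittleO isLittleO_log_id_atTop

theorem Xi_isBigO_and_tendsto (n : ℕ) (hn : 2 ≤ n) :
    ((fun lam : ℝ => (Xi n lam : ℝ)) =O[Filter.atTop]
      (fun lam : ℝ => lam ^ (n - 1) * Real.log lam)) ∧
    Filter.Tendsto (fun lam : ℝ => (Xi n lam : ℝ) / lam ^ n) Filter.atTop (nhds 0) := by
  have hn1 : (1 : ℝ) ≤ n - 1 := by
    have : (2 : ℝ) ≤ n := by exact_mod_cast hn
    linarith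
  have hbound : (fun lam : ℝ => (Xi n lam : ℝ)) =O[atTop] fun lam => lam ^ (n - 1) * log lam := by
    refine IsBigO.of_bound (4 * ((n : ℝ) - 1) ^ (n - 1)) ?_
    filter_upwards [eventually_ge_atTop (exp 1)] with lam hlam
    have hlam1 : 1 ≤ lam := (one_le_exp zero_le_one).trans hlam
    have hlog : 1 ≤ log lam := (le_log_iff_exp_le (by linarith)).2 hlam
    rw [norm_of_nonneg (by positivity), norm_of_nonneg (by positivity)]
    calc (Xi n lam : ℝ) ≤ 2 * (((n : ℝ) - 1) * lam) ^ (n - 1) * harmonic ⌊lam⌋₊ :=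
          Xi_le_harmonic hn (by linarith)
      _ ≤ 2 * (((n : ℝ) - 1) * lam) ^ (n - 1) * (2 * log lam) := by
          gcongr; linarith [harmonic_floor_le_one_add_log lam hlam1]
      _ = _ := by rw [mul_pow]; ring
  have hlittle := isLittleO_pow_mul_log_pow_succ (n - 1)
  rw [Nat.sub_add_cancel (by omega)] at hlittle
  exact ⟨hbound, (hbound.trans_isLittleO hlittle).tendsto_div_nhds_zero⟩
end
end

section
/- Let m ≥ 2 be an even integer and let ℤ/mℤ ⊆ SU(2) denote the cyclic subgroup generated by diag(e^{2πi/m}, e^{−2πi/m}). Then for all natural numbers p, q: dim_ℂ H_{p,q}^{ℤ/mℤ} = 2⌊(p+q)/m⌋ + 1 if p+q is even, and dim_ℂ H_{p,q}^{ℤ/mℤ} = 0 if p+q is odd. -/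
noncomputable section

open MvPolynomial Matrix Complex Real Filter

/-- Variables: `Sum.inl i` is `z i`, `Sum.inr i` is `conj (z i)`. -/
abbrev Var (n : ℕ) := Fin n ⊕ Fin n

/-- Bidegree weight: `z`-variables have weight (1,0), `z̄`-variables weight (0,1). -/
def bidegWt (n : ℕ) : Var n → ℕ × ℕ :=
  Sum.elim (fun _ => ((1 : ℕ), (0 : ℕ))) (fun _ => ((0 : ℕ), (1 : ℕ)))

/-- The Laplacian `∑ i, ∂²/∂zᵢ∂z̄ᵢ` on polynomials in `z, z̄`. -/
def kohnLap (n : ℕ) : MvPolynomial (Var n) ℂ →ₗ[ℂ] MvPolynomial (Var n) ℂ :=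
  ∑ i : Fin n, ((pderiv (R := ℂ) (Sum.inl i)).toLinearMap.comp
    (pderiv (R := ℂ) (Sum.inr i)).toLinearMap)

/-- `H_{p,q}`: harmonic polynomials on ℂⁿ of bidegree `(p,q)`. -/
def Hpq (n p q : ℕ) : Submodule ℂ (MvPolynomial (Var n) ℂ) :=
  (weightedHomogeneousSubmodule ℂ (bidegWt n) (p, q)) ⊓ (LinearMap.ker (kohnLap n))

/-- The action of a unitary matrix `g` on polynomials, `(g · f)(z) = f(g⁻¹ z)`:
substitution `zᵢ ↦ ∑ⱼ (g⁻¹)ᵢⱼ zⱼ`, `z̄ᵢ ↦ ∑ⱼ conj((g⁻¹)ᵢⱼ) z̄ⱼ`. -/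
def uAct (n : ℕ) (g : Matrix.unitaryGroup (Fin n) ℂ) :
    MvPolynomial (Var n) ℂ →ₐ[ℂ] MvPolynomial (Var n) ℂ :=
  aeval (Sum.elim
    (fun i => ∑ j : Fin n,
      MvPolynomial.C ((g⁻¹ : Matrix.unitaryGroup (Fin n) ℂ) i j) * X (Sum.inl j))
    (fun i => ∑ j : Fin n,
      MvPolynomial.C ((starRingEnd ℂ) ((g⁻¹ : Matrix.unitaryGroup (Fin n) ℂ) i j)) * X (Sum.inr j)))

/-- `H_{p,q}^S`: the subspace of `H_{p,q}` invariant under every element of `S`. -/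
def HpqInv (n p q : ℕ) (S : Set (Matrix.unitaryGroup (Fin n) ℂ)) :
    Submodule ℂ (MvPolynomial (Var n) ℂ) :=
  Hpq n p q ⊓ (⨅ g ∈ S, LinearMap.ker ((uAct n g).toLinearMap - LinearMap.id))

/-- `dim_ℂ H_{p,q}^S`. -/
def dimHpqInv (n p q : ℕ) (S : Set (Matrix.unitaryGroup (Fin n) ℂ)) : ℕ :=
  Module.finrank ℂ (HpqInv n p q S)

/-- A set of unitary matrices acts freely on the sphere iff no element other than
the identity has `1` as an eigenvalue. -/
def actsFreely {n : ℕ} (S : Set (Matrix.unitaryGroup (Fin n) ℂ)) : Prop :=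
  ∀ g ∈ S, ((g : Matrix (Fin n) (Fin n) ℂ) - 1).det = 0 → g = 1

/-- The matrix of the quaternion `a + b i + c j + d k`. -/
def qMat (a b c d : ℝ) : Matrix (Fin 2) (Fin 2) ℂ :=
  !![⟨a, b⟩, ⟨-c, d⟩; ⟨c, d⟩, ⟨a, -b⟩]

lemma qMat_mem (a b c d : ℝ) (h : a ^ 2 + b ^ 2 + c ^ 2 + d ^ 2 = 1) :
    qMat a b c d ∈ Matrix.unitaryGroup (Fin 2) ℂ := by
  rw [Matrix.mem_unitaryGroup_iff]
  ext i j
  fin_cases i <;> fin_cases j <;>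
    simp [qMat, Matrix.mul_apply, Fin.sum_univ_two, Matrix.one_apply,
      Complex.ext_iff, Complex.mul_re, Complex.mul_im, Matrix.conjTranspose_apply] <;>
    constructor <;> nlinarith [h]

/-- A unit quaternion as an element of `U(2)`. -/
def unitQ (a b c d : ℝ) (h : a ^ 2 + b ^ 2 + c ^ 2 + d ^ 2 = 1) :
    Matrix.unitaryGroup (Fin 2) ℂ :=
  ⟨qMat a b c d, qMat_mem a b c d h⟩

/-- `diag(e^{iθ}, e^{-iθ})`, i.e. the quaternion `e^{iθ} = cos θ + (sin θ) i`. -/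
def diagU (θ : ℝ) : Matrix.unitaryGroup (Fin 2) ℂ :=
  unitQ (Real.cos θ) (Real.sin θ) 0 0 (by
    have := Real.sin_sq_add_cos_sq θ; nlinarith)

/-- The quaternion `j · e^{iθ}` (the matrix `[[0, -e^{-iθ}], [e^{iθ}, 0]]`). -/
def offU (θ : ℝ) : Matrix.unitaryGroup (Fin 2) ℂ :=
  unitQ 0 0 (Real.cos θ) (Real.sin θ) (by
    have := Real.sin_sq_add_cos_sq θ; nlinarith)

/-- The scalar unitary matrix `e^{iθ}·I`. -/
def scalarU (θ : ℝ) : Matrix.unitaryGroup (Fin 2) ℂ :=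
  ⟨Complex.exp (θ * Complex.I) • (1 : Matrix (Fin 2) (Fin 2) ℂ), by
    rw [Matrix.mem_unitaryGroup_iff]
    rw [Matrix.star_eq_conjTranspose, Matrix.conjTranspose_smul, Matrix.conjTranspose_one]
    rw [Matrix.smul_mul, Matrix.mul_smul, Matrix.one_mul, smul_smul]
    have h1 : Complex.exp (θ * Complex.I) * star (Complex.exp (θ * Complex.I)) = 1 := by
      rw [Complex.star_def, Complex.mul_conj]
      norm_cast
      rw [Complex.normSq_eq_norm_sq, Complex.norm_exp_ofReal_mul_I]
      norm_num
    rw [h1, one_smul]⟩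


namespace Aux

/-- exponent finsupp -/
def ex (a b c d : ℕ) : Var 2 →₀ ℕ :=
  Finsupp.equivFunOnFinite.symm (Sum.elim ![a, b] ![c, d])

@[simp] lemma ex_apply (a b c d : ℕ) (v : Var 2) :
    ex a b c d v = Sum.elim ![a, b] ![c, d] v := rfl

lemma ex_of (e : Var 2 →₀ ℕ) :
    e = ex (e (Sum.inl 0)) (e (Sum.inl 1)) (e (Sum.inr 0)) (e (Sum.inr 1)) := by
  ext v
  rcases v with i | i <;> fin_cases i <;> simp [ex_apply]

lemma ex_inj {a b c d a' b' c' d' : ℕ} (h : ex a b c d = ex a' b' c' d') :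
    a = a' ∧ b = b' ∧ c = c' ∧ d = d' := by
  refine ⟨?_, ?_, ?_, ?_⟩
  · simpa using DFunLike.congr_fun h (Sum.inl 0)
  · simpa using DFunLike.congr_fun h (Sum.inl 1)
  · simpa using DFunLike.congr_fun h (Sum.inr 0)
  · simpa using DFunLike.congr_fun h (Sum.inr 1)

lemma ex_sub_l0 (a b c d : ℕ) :
    ex a b c d - Finsupp.single (Sum.inl 0) 1 = ex (a - 1) b c d := by
  ext v; rcases v with i | i <;> fin_cases i <;>
    simp [ex_apply, Finsupp.single_apply]

lemma ex_sub_l1 (a b c d : ℕ) :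
    ex a b c d - Finsupp.single (Sum.inl 1) 1 = ex a (b - 1) c d := by
  ext v; rcases v with i | i <;> fin_cases i <;>
    simp [ex_apply, Finsupp.single_apply]

lemma ex_sub_r0 (a b c d : ℕ) :
    ex a b c d - Finsupp.single (Sum.inr 0) 1 = ex a b (c - 1) d := by
  ext v; rcases v with i | i <;> fin_cases i <;>
    simp [ex_apply, Finsupp.single_apply]

lemma ex_sub_r1 (a b c d : ℕ) :
    ex a b c d - Finsupp.single (Sum.inr 1) 1 = ex a b c (d - 1) := by
  ext v; rcases v with i | i <;> fin_cases i <;>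
    simp [ex_apply, Finsupp.single_apply]

lemma ex_add_l0 (a b c d : ℕ) :
    ex a b c d + Finsupp.single (Sum.inl 0) 1 = ex (a + 1) b c d := by
  ext v; rcases v with i | i <;> fin_cases i <;>
    simp [ex_apply, Finsupp.single_apply]

lemma ex_add_l1 (a b c d : ℕ) :
    ex a b c d + Finsupp.single (Sum.inl 1) 1 = ex a (b + 1) c d := by
  ext v; rcases v with i | i <;> fin_cases i <;>
    simp [ex_apply, Finsupp.single_apply]

lemma ex_add_r0 (a b c d : ℕ) :
    ex a b c d + Finsupp.single (Sum.inr 0) 1 = ex a b (c + 1) d := by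
  ext v; rcases v with i | i <;> fin_cases i <;>
    simp [ex_apply, Finsupp.single_apply]

lemma ex_add_r1 (a b c d : ℕ) :
    ex a b c d + Finsupp.single (Sum.inr 1) 1 = ex a b c (d + 1) := by
  ext v; rcases v with i | i <;> fin_cases i <;>
    simp [ex_apply, Finsupp.single_apply]

/-- weight of a finsupp exponent, as a finite sum -/
lemma weight_eq_sum {M : Type*} [AddCommMonoid M] (w : Var 2 → M) (e : Var 2 →₀ ℕ) :
    Finsupp.weight w e = ∑ v : Var 2, e v • w v := by
  rw [Finsupp.weight_apply]
  exact Finsupp.sum_fintype _ _ (fun v => zero_smul _ _)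

lemma weight_bideg (e : Var 2 →₀ ℕ) :
    Finsupp.weight (bidegWt 2) e =
      (e (Sum.inl 0) + e (Sum.inl 1), e (Sum.inr 0) + e (Sum.inr 1)) := by
  rw [weight_eq_sum, Fintype.sum_sum_type, Fin.sum_univ_two, Fin.sum_univ_two]
  simp [bidegWt, Prod.ext_iff]

def Mo (a b c d : ℕ) : MvPolynomial (Var 2) ℂ := monomial (ex a b c d) 1

lemma kohnLap_Mo (a b c d : ℕ) :
    kohnLap 2 (Mo a b c d) =
      ((a * c : ℕ) : ℂ) • Mo (a - 1) b (c - 1) d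
        + ((b * d : ℕ) : ℂ) • Mo a (b - 1) c (d - 1) := by
  rw [kohnLap, LinearMap.sum_apply, Fin.sum_univ_two]
  simp only [LinearMap.comp_apply, Derivation.coeFn_coe, Mo]
  rw [pderiv_monomial, pderiv_monomial, pderiv_monomial, pderiv_monomial]
  rw [ex_sub_r0, ex_sub_r1, ex_sub_l0, ex_sub_l1]
  simp only [ex_apply]
  rw [smul_monomial, smul_monomial]
  norm_num
  rw [mul_comm (c:ℂ) (a:ℂ), mul_comm (d:ℂ) (b:ℂ)]

lemma coeff_pderiv (i : Var 2) (e : Var 2 →₀ ℕ) (f : MvPolynomial (Var 2) ℂ) :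
    coeff e (pderiv i f) = ((e i + 1 : ℕ) : ℂ) * coeff (e + Finsupp.single i 1) f := by
  induction f using MvPolynomial.induction_on' with
  | monomial d a =>
    rw [pderiv_monomial, coeff_monomial, coeff_monomial]
    by_cases h : d = e + Finsupp.single i 1
    · subst h
      rw [if_pos (add_tsub_cancel_right _ _), if_pos rfl]
      simp [Finsupp.add_apply, Finsupp.single_apply]
      ring
    · rw [if_neg h, mul_zero]
      by_cases h2 : d - Finsupp.single i 1 = e
      · by_cases h3 : d i = 0
        · simp [h3]
        · exfalso
          apply h
          rw [← h2, tsub_add_cancel_of_le]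
          rwa [Finsupp.single_le_iff, Nat.one_le_iff_ne_zero]
      · rw [if_neg h2]
  | add f g hf hg =>
    rw [map_add, coeff_add, coeff_add, hf, hg, mul_add]

lemma coeff_kohnLap (e : Var 2 →₀ ℕ) (f : MvPolynomial (Var 2) ℂ) :
    coeff e (kohnLap 2 f) =
      ((e (Sum.inl 0) + 1 : ℕ) : ℂ) * ((e (Sum.inr 0) + 1 : ℕ) : ℂ) *
        coeff (e + Finsupp.single (Sum.inl 0) 1 + Finsupp.single (Sum.inr 0) 1) f
      + ((e (Sum.inl 1) + 1 : ℕ) : ℂ) * ((e (Sum.inr 1) + 1 : ℕ) : ℂ) *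
        coeff (e + Finsupp.single (Sum.inl 1) 1 + Finsupp.single (Sum.inr 1) 1) f := by
  rw [kohnLap, LinearMap.sum_apply, Fin.sum_univ_two, coeff_add]
  simp only [LinearMap.comp_apply, Derivation.coeFn_coe]
  rw [coeff_pderiv, coeff_pderiv, coeff_pderiv, coeff_pderiv]
  have e1 : (e + Finsupp.single (Sum.inl (0:Fin 2)) 1 : Var 2 →₀ ℕ) (Sum.inr (0 : Fin 2))
      = e (Sum.inr 0) := by simp [Finsupp.add_apply, Finsupp.single_apply]
  have e2 : (e + Finsupp.single (Sum.inl (1:Fin 2)) 1 : Var 2 →₀ ℕ) (Sum.inr (1 : Fin 2))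
      = e (Sum.inr 1) := by simp [Finsupp.add_apply, Finsupp.single_apply]
  rw [e1, e2]
  have c1 : e + Finsupp.single (Sum.inl 0) 1 + Finsupp.single (Sum.inr 0) 1
      = e + Finsupp.single (Sum.inr 0) 1 + Finsupp.single (Sum.inl 0) 1 := by
    abel
  have c2 : e + Finsupp.single (Sum.inl 1) 1 + Finsupp.single (Sum.inr 1) 1
      = e + Finsupp.single (Sum.inr 1) 1 + Finsupp.single (Sum.inl 1) 1 := by
    abel
  rw [c1, c2]
  ring

def cf (p q j r : ℕ) : ℂ :=
  (-1 : ℂ) ^ r * (j.choose r) * (p.descFactorial (j - r)) * (q.descFactorial r)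

def fj (p q j : ℕ) : MvPolynomial (Var 2) ℂ :=
  ∑ r ∈ Finset.range (j + 1), cf p q j r • Mo (p - (j - r)) (j - r) r (q - r)

lemma key_nat (p q j r : ℕ) (hr : r < j) :
    j.choose (r+1) * p.descFactorial (j - r - 1) * q.descFactorial (r+1)
      * ((p - (j - r - 1)) * (r+1))
    = j.choose r * p.descFactorial (j - r) * q.descFactorial r * ((j - r) * (q - r)) := by
  have h1 : (p - (j - r - 1)) * p.descFactorial (j - r - 1) = p.descFactorial (j - r) := by
    have h : j - r = (j - r - 1) + 1 := by omega
    rw [h, Nat.descFactorial_succ]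
    have : j - r - 1 + 1 - 1 = j - r - 1 := by omega
    rw [this]
  have h2 : q.descFactorial (r+1) = (q - r) * q.descFactorial r := Nat.descFactorial_succ q r
  have h3 : j.choose (r+1) * (r+1) = j.choose r * (j - r) := Nat.choose_succ_right_eq j r
  calc j.choose (r+1) * p.descFactorial (j-r-1) * q.descFactorial (r+1)
        * ((p - (j-r-1)) * (r+1))
      = (j.choose (r+1) * (r+1)) * ((p - (j-r-1)) * p.descFactorial (j-r-1))
        * q.descFactorial (r+1) := by ring
    _ = (j.choose r * (j-r)) * p.descFactorial (j-r) * ((q-r) * q.descFactorial r) := by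
        rw [h1, h2, h3]
    _ = _ := by ring

lemma cf_succ_mul (p q j r : ℕ) (hr : r < j) :
    cf p q j (r+1) * (((p - (j - (r+1))) * (r+1) : ℕ) : ℂ)
      + cf p q j r * (((j - r) * (q - r) : ℕ) : ℂ) = 0 := by
  have hN := key_nat p q j r hr
  have hjr : j - (r+1) = j - r - 1 := by omega
  unfold cf
  rw [hjr, pow_succ]
  have hC : ((j.choose (r+1) * p.descFactorial (j - r - 1) * q.descFactorial (r+1)
      * ((p - (j - r - 1)) * (r+1)) : ℕ) : ℂ)
    = ((j.choose r * p.descFactorial (j - r) * q.descFactorial r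
      * ((j - r) * (q - r)) : ℕ) : ℂ) := Nat.cast_inj.mpr hN
  push_cast at hC ⊢
  linear_combination -((-1:ℂ))^r * hC

lemma kohnLap_fj (p q j : ℕ) : kohnLap 2 (fj p q j) = 0 := by
  have expand : kohnLap 2 (fj p q j)
      = (∑ r ∈ Finset.range (j+1),
          (cf p q j r * (((p - (j - r)) * r : ℕ) : ℂ)) • Mo (p - (j - r) - 1) (j - r) (r - 1) (q - r))
        + ∑ r ∈ Finset.range (j+1),
          (cf p q j r * (((j - r) * (q - r) : ℕ) : ℂ)) • Mo (p - (j - r)) (j - r - 1) r (q - r - 1) := by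
    rw [fj, map_sum, ← Finset.sum_add_distrib]
    refine Finset.sum_congr rfl fun r _ => ?_
    rw [LinearMap.map_smul, kohnLap_Mo, smul_add, smul_smul, smul_smul]
  rw [expand, Finset.sum_range_succ' _ j, Finset.sum_range_succ _ j]
  have hA0 : (cf p q j 0 * (((p - (j - 0)) * 0 : ℕ) : ℂ)) •
      Mo (p - (j - 0) - 1) (j - 0) (0 - 1) (q - 0) = 0 := by simp
  have hBj : (cf p q j j * (((j - j) * (q - j) : ℕ) : ℂ)) •
      Mo (p - (j - j)) (j - j - 1) j (q - j - 1) = 0 := by simp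
  rw [hA0, hBj, add_zero, add_zero, ← Finset.sum_add_distrib]
  refine Finset.sum_eq_zero fun r hr => ?_
  have hrj : r < j := Finset.mem_range.mp hr
  have hMo : Mo (p - (j - (r+1)) - 1) (j - (r+1)) (r + 1 - 1) (q - (r+1))
      = Mo (p - (j - r)) (j - r - 1) r (q - r - 1) := by
    congr 1 <;> omega
  rw [hMo, ← add_smul, cf_succ_mul p q j r hrj, zero_smul]

lemma cf_eq_zero_of (p q j r : ℕ) (h : ¬(j - r ≤ p ∧ r ≤ q)) : cf p q j r = 0 := by
  unfold cf
  rcases not_and_or.mp h with h | h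
  · have : p.descFactorial (j - r) = 0 := Nat.descFactorial_eq_zero_iff_lt.mpr (by omega)
    rw [this]
    push_cast
    ring
  · have : q.descFactorial r = 0 := Nat.descFactorial_eq_zero_iff_lt.mpr (by omega)
    rw [this]
    push_cast
    ring

lemma fj_mem_bideg (p q j : ℕ) :
    fj p q j ∈ weightedHomogeneousSubmodule ℂ (bidegWt 2) (p, q) := by
  refine Submodule.sum_mem _ fun r hr => ?_
  by_cases hc : j - r ≤ p ∧ r ≤ q
  · refine Submodule.smul_mem _ _ ?_
    rw [mem_weightedHomogeneousSubmodule]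
    refine isWeightedHomogeneous_monomial _ _ _ ?_
    rw [weight_bideg]
    simp only [ex_apply]
    simp only [Sum.elim_inl, Sum.elim_inr, Matrix.cons_val_zero, Matrix.cons_val_one,
      Matrix.head_cons]
    refine Prod.ext ?_ ?_ <;> simp <;> omega
  · rw [cf_eq_zero_of p q j r hc, zero_smul]
    exact Submodule.zero_mem _

def w3 : Var 2 → ℕ := Sum.elim ![0, 1] ![1, 0]

lemma fj_mem_w3 (p q j : ℕ) :
    fj p q j ∈ weightedHomogeneousSubmodule ℂ w3 j := by
  refine Submodule.sum_mem _ fun r hr => Submodule.smul_mem _ _ ?_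
  have hrj : r ≤ j := by have := Finset.mem_range.mp hr; omega
  rw [mem_weightedHomogeneousSubmodule]
  refine isWeightedHomogeneous_monomial _ _ _ ?_
  rw [weight_eq_sum, Fintype.sum_sum_type, Fin.sum_univ_two, Fin.sum_univ_two]
  simp only [ex_apply, w3]
  simp only [Sum.elim_inl, Sum.elim_inr, Matrix.cons_val_zero, Matrix.cons_val_one,
    Matrix.head_cons, smul_eq_mul]
  omega

lemma coeff_fj (p q j r0 : ℕ) (h : r0 ≤ j) :
    coeff (ex (p - (j - r0)) (j - r0) r0 (q - r0)) (fj p q j) = cf p q j r0 := by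
  rw [fj, MvPolynomial.coeff_sum]
  rw [Finset.sum_eq_single r0]
  · rw [Mo, coeff_smul, coeff_monomial, if_pos rfl]
    simp
  · intro r hr hne
    rw [Mo, coeff_smul, coeff_monomial, if_neg, smul_zero]
    intro heq
    exact hne (ex_inj heq).2.2.1
  · intro hmem
    exact absurd (Finset.mem_range.mpr (by omega)) hmem

lemma cf_witness_ne_zero (p q j : ℕ) (hj : j ≤ p + q) : cf p q j (j - p) ≠ 0 := by
  unfold cf
  refine mul_ne_zero (mul_ne_zero (mul_ne_zero (pow_ne_zero _ (by norm_num)) ?_) ?_) ?_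
  · exact Nat.cast_ne_zero.mpr (Nat.choose_pos (by omega)).ne'
  · refine Nat.cast_ne_zero.mpr fun h0 => ?_
    have := Nat.descFactorial_eq_zero_iff_lt.mp h0
    omega
  · refine Nat.cast_ne_zero.mpr fun h0 => ?_
    have := Nat.descFactorial_eq_zero_iff_lt.mp h0
    omega

lemma exp_I' (θ : ℝ) : Complex.exp ((θ:ℂ) * Complex.I) = ⟨Real.cos θ, Real.sin θ⟩ := by
  rw [Complex.exp_mul_I, Complex.mk_eq_add_mul_I, ← Complex.ofReal_cos, ← Complex.ofReal_sin]

lemma exp_neg_I' (θ : ℝ) : Complex.exp (-(θ:ℂ) * Complex.I) = ⟨Real.cos θ, -Real.sin θ⟩ := by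
  have : -(θ:ℂ) = ((-θ : ℝ) : ℂ) := by push_cast; ring
  rw [this, exp_I' (-θ), Real.cos_neg, Real.sin_neg]

lemma exp_neg_I'' (θ : ℝ) : Complex.exp (-((θ:ℂ) * Complex.I)) = ⟨Real.cos θ, -Real.sin θ⟩ := by
  rw [← neg_mul]; exact exp_neg_I' θ

lemma diagU_val (θ : ℝ) : (diagU θ : Matrix (Fin 2) (Fin 2) ℂ)
    = !![Complex.exp ((θ:ℂ) * Complex.I), 0; 0, Complex.exp (-(θ:ℂ) * Complex.I)] := by
  unfold diagU unitQ qMat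
  ext i j
  fin_cases i <;> fin_cases j <;>
    simp [exp_I', exp_neg_I', exp_neg_I'', Complex.ext_iff, neg_mul]


lemma diagU_mul (a b : ℝ) : diagU a * diagU b = diagU (a + b) := by
  apply Subtype.ext
  show (diagU a : Matrix (Fin 2) (Fin 2) ℂ) * (diagU b : Matrix (Fin 2) (Fin 2) ℂ) = _
  rw [diagU_val, diagU_val, diagU_val]
  ext i j
  fin_cases i <;> fin_cases j <;>
    · simp [Matrix.mul_apply, Fin.sum_univ_two, ← Complex.exp_add]
      try (congr 1; push_cast; ring)


lemma diagU_zero : diagU 0 = 1 := by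
  apply Subtype.ext
  show (diagU 0 : Matrix (Fin 2) (Fin 2) ℂ) = 1
  rw [diagU_val]
  ext i j
  fin_cases i <;> fin_cases j <;> norm_num [Matrix.one_apply]


lemma diagU_inv (θ : ℝ) : (diagU θ)⁻¹ = diagU (-θ) := by
  apply inv_eq_of_mul_eq_one_right
  rw [diagU_mul]
  simpa using diagU_zero


def lam (θ : ℝ) : Var 2 → ℂ :=
  Sum.elim ![Complex.exp (-(θ:ℂ) * Complex.I), Complex.exp ((θ:ℂ) * Complex.I)]
    ![Complex.exp ((θ:ℂ) * Complex.I), Complex.exp (-(θ:ℂ) * Complex.I)]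

lemma uAct_diagU_eq (θ : ℝ) :
    uAct 2 (diagU θ) = aeval (fun v => MvPolynomial.C (lam θ v) * X v) := by
  unfold uAct
  have hconj1 : (starRingEnd ℂ) (Complex.exp (-((θ:ℂ) * Complex.I)))
      = Complex.exp ((θ:ℂ) * Complex.I) := by
    rw [← Complex.exp_conj]
    congr 1
    rw [map_neg, _root_.map_mul, Complex.conj_I, Complex.conj_ofReal]
    ring
  have hconj2 : (starRingEnd ℂ) (Complex.exp ((θ:ℂ) * Complex.I))
      = Complex.exp (-((θ:ℂ) * Complex.I)) := by
    rw [← Complex.exp_conj]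
    congr 1
    rw [_root_.map_mul, Complex.conj_I, Complex.conj_ofReal]
    ring
  have e00 : (diagU θ : Matrix (Fin 2) (Fin 2) ℂ) 0 0 = Complex.exp ((θ:ℂ) * Complex.I) := by
    rw [diagU_val]; norm_num
  have e01 : (diagU θ : Matrix (Fin 2) (Fin 2) ℂ) 0 1 = 0 := by rw [diagU_val]; norm_num
  have e10 : (diagU θ : Matrix (Fin 2) (Fin 2) ℂ) 1 0 = 0 := by rw [diagU_val]; norm_num
  have e11 : (diagU θ : Matrix (Fin 2) (Fin 2) ℂ) 1 1 = Complex.exp (-(θ:ℂ) * Complex.I) := by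
    rw [diagU_val]; norm_num
  congr 1
  funext v
  rcases v with i | i <;> fin_cases i <;>
    simp [lam, Fin.sum_univ_two, hconj1, hconj2, e00, e01, e10, e11, neg_mul]

lemma aeval_diag_Mo (l : Var 2 → ℂ) (a b c d : ℕ) :
    aeval (fun v => MvPolynomial.C (l v) * X v) (Mo a b c d)
      = (l (Sum.inl 0) ^ a * l (Sum.inl 1) ^ b * l (Sum.inr 0) ^ c * l (Sum.inr 1) ^ d)
          • Mo a b c d := by
  rw [Mo, aeval_monomial, _root_.map_one, one_mul, smul_monomial, smul_eq_mul, mul_one, monomial_eq]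
  rw [Finsupp.prod_fintype _ _ (fun v => pow_zero _), Finsupp.prod_fintype _ _ (fun v => pow_zero _)]
  simp_rw [mul_pow, ← C_pow]
  rw [Finset.prod_mul_distrib, ← map_prod]
  congr 1
  rw [Fintype.prod_sum_type, Fin.prod_univ_two, Fin.prod_univ_two]
  simp [ex_apply]
  ring

lemma uAct_diagU_fj (θ : ℝ) (p q j : ℕ) :
    uAct 2 (diagU θ) (fj p q j)
      = Complex.exp ((2 * (j:ℤ) - (p:ℤ) - (q:ℤ) : ℤ) * (θ:ℂ) * Complex.I) • fj p q j := by
  rw [uAct_diagU_eq, fj, map_sum, Finset.smul_sum]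
  refine Finset.sum_congr rfl fun r hr => ?_
  have hrj : r ≤ j := by have := Finset.mem_range.mp hr; omega
  by_cases hc : j - r ≤ p ∧ r ≤ q
  · have hsm := ((aeval fun v => MvPolynomial.C (lam θ v) * X v).toLinearMap).map_smul
      (cf p q j r) (Mo (p - (j - r)) (j - r) r (q - r))
    simp only [AlgHom.toLinearMap_apply] at hsm
    rw [hsm, aeval_diag_Mo, smul_smul, smul_smul]
    congr 1
    simp only [lam, Sum.elim_inl, Sum.elim_inr, Matrix.cons_val_zero, Matrix.cons_val_one,
      Matrix.head_cons]
    rw [← Complex.exp_nat_mul, ← Complex.exp_nat_mul, ← Complex.exp_nat_mul,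
      ← Complex.exp_nat_mul, ← Complex.exp_add, ← Complex.exp_add, ← Complex.exp_add]
    rw [mul_comm (cf p q j r)]
    congr 1
    rw [Nat.cast_sub hc.1, Nat.cast_sub hrj, Nat.cast_sub hc.2]
    push_cast
    ring
  · rw [cf_eq_zero_of p q j r hc, zero_smul, map_zero, smul_zero]

lemma diagU_zpow (θ : ℝ) (k : ℤ) : diagU θ ^ k = diagU (k * θ) := by
  induction k using Int.induction_on with
  | zero => rw [zpow_zero, show ((0:ℤ):ℝ) * θ = 0 by push_cast; ring, diagU_zero]
  | succ k ih =>
    rw [_root_.zpow_add_one, ih, diagU_mul]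
    congr 1
    push_cast
    ring
  | pred k ih =>
    rw [show (-(k:ℤ) - 1) = (-(k:ℤ)) - 1 by ring, _root_.zpow_sub_one, ih, diagU_inv, diagU_mul]
    congr 1
    push_cast
    ring

lemma fj_mem_Hpq (p q j : ℕ) : fj p q j ∈ Hpq 2 p q :=
  ⟨fj_mem_bideg p q j, by simp [LinearMap.mem_ker, kohnLap_fj p q j]⟩

lemma hpq_coeff_zero (p q : ℕ) (f : MvPolynomial (Var 2) ℂ)
    (hf : f ∈ Hpq 2 p q)
    (hb1 : ∀ a : ℕ, a ≤ p → coeff (ex a (p - a) 0 (q - 0)) f = 0)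
    (hb2 : ∀ c : ℕ, c ≤ q → coeff (ex 0 (p - 0) c (q - c)) f = 0) :
    f = 0 := by
  obtain ⟨hhom, hker⟩ := Submodule.mem_inf.mp hf
  rw [mem_weightedHomogeneousSubmodule] at hhom
  have hlap : kohnLap 2 f = 0 := LinearMap.mem_ker.mp hker
  have key : ∀ k a c, a ≤ p → c ≤ q → min a c ≤ k → coeff (ex a (p - a) c (q - c)) f = 0 := by
    intro k
    induction k with
    | zero =>
      intro a c ha hc hm
      have : a = 0 ∨ c = 0 := by omega
      rcases this with h | h
      · subst h; exact hb2 c hc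
      · subst h; exact hb1 a ha
    | succ k ih =>
      intro a c ha hc hm
      by_cases hm' : min a c ≤ k
      · exact ih a c ha hc hm'
      · obtain ⟨a', rfl⟩ : ∃ a', a = a' + 1 := ⟨a - 1, by omega⟩
        obtain ⟨c', rfl⟩ : ∃ c', c = c' + 1 := ⟨c - 1, by omega⟩
        have h0 := coeff_kohnLap (ex a' (p - (a' + 1)) c' (q - (c' + 1))) f
        rw [hlap, MvPolynomial.coeff_zero] at h0
        have he1 : ex a' (p - (a'+1)) c' (q - (c'+1)) + Finsupp.single (Sum.inl 0) 1
            + Finsupp.single (Sum.inr 0) 1 = ex (a'+1) (p - (a'+1)) (c'+1) (q - (c'+1)) := by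
          rw [ex_add_l0, ex_add_r0]
        have he2 : ex a' (p - (a'+1)) c' (q - (c'+1)) + Finsupp.single (Sum.inl 1) 1
            + Finsupp.single (Sum.inr 1) 1 = ex a' (p - a') c' (q - c') := by
          rw [ex_add_l1, ex_add_r1]
          congr 1 <;> omega
        rw [he1, he2] at h0
        have hIH : coeff (ex a' (p - a') c' (q - c')) f = 0 :=
          ih a' c' (by omega) (by omega) (by omega)
        rw [hIH, mul_zero, add_zero] at h0
        simp only [ex_apply, Sum.elim_inl, Sum.elim_inr, Matrix.cons_val_zero] at h0
        have hx : ((a' + 1 : ℕ) : ℂ) ≠ 0 := Nat.cast_ne_zero.mpr (Nat.succ_ne_zero a')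
        have hy : ((c' + 1 : ℕ) : ℂ) ≠ 0 := Nat.cast_ne_zero.mpr (Nat.succ_ne_zero c')
        have := (mul_eq_zero.mp h0.symm).resolve_left (mul_ne_zero hx hy)
        exact this
  apply MvPolynomial.ext
  intro d
  rw [MvPolynomial.coeff_zero]
  by_cases hd : coeff d f = 0
  · exact hd
  · exfalso
    have hw := hhom hd
    rw [weight_bideg] at hw
    have h1 : d (Sum.inl 0) + d (Sum.inl 1) = p := congrArg Prod.fst hw
    have h2 : d (Sum.inr 0) + d (Sum.inr 1) = q := congrArg Prod.snd hw
    have hd' : d = ex (d (Sum.inl 0)) (p - d (Sum.inl 0)) (d (Sum.inr 0)) (q - d (Sum.inr 0)) := by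
      nth_rewrite 1 [ex_of d]
      congr 1 <;> omega
    apply hd
    rw [hd']
    exact key (min (d (Sum.inl 0)) (d (Sum.inr 0))) _ _ (by omega) (by omega) le_rfl

lemma weight_w3_witness (p q n : ℕ) :
    Finsupp.weight w3 (ex (p - (n - (n - p))) (n - (n - p)) (n - p) (q - (n - p))) = n := by
  rw [weight_eq_sum, Fintype.sum_sum_type, Fin.sum_univ_two, Fin.sum_univ_two]
  simp only [ex_apply, w3, Sum.elim_inl, Sum.elim_inr, Matrix.cons_val_zero, Matrix.cons_val_one,
    Matrix.head_cons, smul_eq_mul]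
  omega

lemma fj_linearIndependent (p q : ℕ) :
    LinearIndependent ℂ (fun j : Fin (p + q + 1) => fj p q (j : ℕ)) := by
  rw [linearIndependent_iff']
  intro s g hsum i hi
  set n := (i : ℕ) with hn
  have hnpq : n ≤ p + q := by omega
  set r0 := n - p with hr0
  set e := ex (p - (n - r0)) (n - r0) r0 (q - r0) with he
  have hcoeff := congrArg (coeff e) hsum
  rw [MvPolynomial.coeff_sum, MvPolynomial.coeff_zero] at hcoeff
  rw [Finset.sum_eq_single i] at hcoeff
  · rw [coeff_smul, coeff_fj p q n r0 (by omega), smul_eq_mul] at hcoeff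
    have hne := cf_witness_ne_zero p q n hnpq
    exact (mul_eq_zero.mp hcoeff).resolve_right hne
  · intro m hms hmne
    rw [coeff_smul]
    have h0 : coeff e (fj p q (m : ℕ)) = 0 := by
      by_contra h0
      have hw := (mem_weightedHomogeneousSubmodule _ _ _ _).mp (fj_mem_w3 p q (m : ℕ)) h0
      rw [weight_w3_witness p q n] at hw
      exact hmne (Fin.ext hw.symm)
    rw [h0, smul_zero]
  · intro his
    exact absurd hi his

lemma Hpq_eq_span (p q : ℕ) :
    Hpq 2 p q = Submodule.span ℂ (Set.range (fun j : Fin (p + q + 1) => fj p q (j : ℕ))) := by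
  classical
  set ι := (Fin (p+1) ⊕ Fin q) with hι
  set eIdx : ι → (Var 2 →₀ ℕ) :=
    Sum.elim (fun a => ex (a : ℕ) (p - (a : ℕ)) 0 (q - 0))
      (fun c => ex 0 (p - 0) ((c : ℕ) + 1) (q - ((c : ℕ) + 1))) with heIdx
  set B : MvPolynomial (Var 2) ℂ →ₗ[ℂ] (ι → ℂ) :=
    LinearMap.pi (fun i => MvPolynomial.lcoeff ℂ (eIdx i)) with hB
  set Bres : (Hpq 2 p q) →ₗ[ℂ] (ι → ℂ) := B.comp (Hpq 2 p q).subtype with hBres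
  have hinj : Function.Injective Bres := by
    rw [← LinearMap.ker_eq_bot, LinearMap.ker_eq_bot']
    intro x hx
    have hz : (x : MvPolynomial (Var 2) ℂ) = 0 := by
      apply hpq_coeff_zero p q _ x.2
      · intro a ha
        have := congrFun hx (Sum.inl ⟨a, by omega⟩)
        simpa [hBres, hB, heIdx, MvPolynomial.lcoeff] using this
      · intro c hc
        rcases Nat.eq_zero_or_pos c with h | h
        · subst h
          have := congrFun hx (Sum.inl ⟨0, by omega⟩)
          simpa [hBres, hB, heIdx, MvPolynomial.lcoeff] using this
        · obtain ⟨c', rfl⟩ : ∃ c', c = c' + 1 := ⟨c - 1, by omega⟩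
          have := congrFun hx (Sum.inr ⟨c', by omega⟩)
          simpa [hBres, hB, heIdx, MvPolynomial.lcoeff] using this
    exact Subtype.ext hz
  haveI : FiniteDimensional ℂ (Hpq 2 p q) := FiniteDimensional.of_injective Bres hinj
  have hle : Submodule.span ℂ (Set.range (fun j : Fin (p + q + 1) => fj p q (j : ℕ)))
      ≤ Hpq 2 p q := by
    rw [Submodule.span_le]
    rintro _ ⟨j, rfl⟩
    exact fj_mem_Hpq p q j
  have hrank1 : Module.finrank ℂ (Hpq 2 p q) ≤ p + q + 1 := by
    have h := LinearMap.finrank_le_finrank_of_injective hinj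
    rw [Module.finrank_fintype_fun_eq_card, Fintype.card_sum, Fintype.card_fin,
      Fintype.card_fin] at h
    omega
  have hrank2 : Module.finrank ℂ
      (Submodule.span ℂ (Set.range (fun j : Fin (p + q + 1) => fj p q (j : ℕ))))
      = p + q + 1 := by
    rw [finrank_span_eq_card (fj_linearIndependent p q), Fintype.card_fin]
  exact (Submodule.eq_of_le_of_finrank_le hle (by rw [hrank2]; exact hrank1)).symm

lemma uAct_zpowers_fj (m : ℕ) (hm : 2 ≤ m) (p q j : ℕ)
    (hdvd : (m:ℤ) ∣ 2*(j:ℤ) - p - q)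
    (h : Matrix.unitaryGroup (Fin 2) ℂ) (hh : h ∈ Subgroup.zpowers (diagU (2 * Real.pi / m))) :
    uAct 2 h (fj p q j) = fj p q j := by
  obtain ⟨k, rfl⟩ := Subgroup.mem_zpowers_iff.mp hh
  rw [diagU_zpow, uAct_diagU_fj]
  obtain ⟨t, ht⟩ := hdvd
  have hm0 : (m:ℝ) ≠ 0 := Nat.cast_ne_zero.mpr (by omega)
  have harg : ((2*(j:ℤ) - (p:ℤ) - (q:ℤ) : ℤ) : ℂ) * ((k * (2 * Real.pi / m) : ℝ) : ℂ) * Complex.I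
      = ((t * k : ℤ) : ℂ) * (2 * (Real.pi : ℂ) * Complex.I) := by
    rw [ht]
    have hmc : ((m:ℕ) : ℂ) ≠ 0 := Nat.cast_ne_zero.mpr (by omega)
    push_cast
    field_simp
  rw [harg, Complex.exp_int_mul_two_pi_mul_I, one_smul]

lemma eig_ne_one (m : ℕ) (hm : 2 ≤ m) (p q j : ℕ)
    (hnd : ¬ (m:ℤ) ∣ 2*(j:ℤ) - p - q) :
    Complex.exp (((2*(j:ℤ) - (p:ℤ) - (q:ℤ) : ℤ) : ℂ)
      * ((2 * Real.pi / m : ℝ) : ℂ) * Complex.I) ≠ 1 := by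
  intro h1
  rw [Complex.exp_eq_one_iff] at h1
  obtain ⟨n, hn⟩ := h1
  apply hnd
  have hm0 : (m:ℝ) ≠ 0 := Nat.cast_ne_zero.mpr (by omega)
  set K : ℤ := 2*(j:ℤ) - (p:ℤ) - (q:ℤ) with hK
  -- compare imaginary parts
  have him : (K : ℝ) * (2 * Real.pi / m) = n * (2 * Real.pi) := by
    have h3 := congrArg Complex.im hn
    simp [Complex.mul_im, Complex.ofReal_re, Complex.ofReal_im] at h3
    convert h3 using 1 <;> push_cast <;> ring
  have hKr : (K : ℝ) = n * m := by
    have h6 := congrArg (fun x : ℝ => x * m) him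
    have h5 : (K:ℝ) * (2*Real.pi) = ((n : ℝ) * m) * (2*Real.pi) := by
      calc (K:ℝ) * (2*Real.pi) = (K:ℝ) * (2*Real.pi/m) * m := by field_simp
      _ = (n * (2*Real.pi)) * m := by rw [h6]
      _ = ((n:ℝ)*m) * (2*Real.pi) := by ring
    have hpi : (2*Real.pi) ≠ 0 := (by positivity : (0:ℝ) < 2*Real.pi).ne'
    exact mul_right_cancel₀ hpi h5
  have hKz : K = n * m := by exact_mod_cast hKr
  exact ⟨n, by rw [hKz]; ring⟩

lemma HpqInv_eq_span (m : ℕ) (hm : 2 ≤ m) (p q : ℕ) :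
    HpqInv 2 p q ((Subgroup.zpowers (diagU (2 * Real.pi / m)) : Subgroup _) : Set _)
      = Submodule.span ℂ (Set.range
          (fun i : {i : Fin (p+q+1) // (m:ℤ) ∣ 2*((i:ℕ):ℤ) - (p:ℤ) - (q:ℤ)} =>
            fj p q ((i : Fin (p+q+1)) : ℕ))) := by
  classical
  apply le_antisymm
  · intro v hv
    obtain ⟨hvH, hvI⟩ := Submodule.mem_inf.mp hv
    rw [Hpq_eq_span, Submodule.mem_span_range_iff_exists_fun] at hvH
    obtain ⟨c, hc⟩ := hvH
    have hfix : uAct 2 (diagU (2 * Real.pi / m)) v = v := by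
      have h1 := (Submodule.mem_iInf _).mp hvI (diagU (2 * Real.pi / m))
      have h2 := (Submodule.mem_iInf _).mp h1 (Subgroup.mem_zpowers _)
      rw [LinearMap.mem_ker, LinearMap.sub_apply, LinearMap.id_apply, sub_eq_zero,
        AlgHom.toLinearMap_apply] at h2
      exact h2
    set lamv : Fin (p+q+1) → ℂ := fun i =>
      Complex.exp (((2*((i:ℕ):ℤ) - (p:ℤ) - (q:ℤ) : ℤ) : ℂ)
        * ((2 * Real.pi / m : ℝ) : ℂ) * Complex.I) with hlamv
    have hAct : ∑ i : Fin (p+q+1), (c i * lamv i) • fj p q (i : ℕ)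
        = ∑ i : Fin (p+q+1), c i • fj p q (i : ℕ) := by
      have h4 : uAct 2 (diagU (2 * Real.pi / m)) (∑ i : Fin (p+q+1), c i • fj p q (i : ℕ))
          = ∑ i : Fin (p+q+1), (c i * lamv i) • fj p q (i : ℕ) := by
        rw [map_sum]
        refine Finset.sum_congr rfl fun i _ => ?_
        have hsm := ((uAct 2 (diagU (2 * Real.pi / m))).toLinearMap).map_smul
          (c i) (fj p q (i : ℕ))
        simp only [AlgHom.toLinearMap_apply] at hsm
        rw [hsm, uAct_diagU_fj, smul_smul]
      rw [← h4, hc, hfix]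
    have hcoord : ∀ i : Fin (p+q+1), c i * lamv i - c i = 0 := by
      have hzero : ∑ i : Fin (p+q+1), (c i * lamv i - c i) • fj p q (i : ℕ) = 0 := by
        simp only [sub_smul]
        rw [Finset.sum_sub_distrib, hAct, sub_self]
      intro i
      exact linearIndependent_iff'.mp (fj_linearIndependent p q) Finset.univ
        (fun i => c i * lamv i - c i) hzero i (Finset.mem_univ i)
    rw [← hc]
    refine Submodule.sum_mem _ fun i _ => ?_
    by_cases hdiv : (m:ℤ) ∣ 2*((i:ℕ):ℤ) - (p:ℤ) - (q:ℤ)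
    · exact Submodule.smul_mem _ _ (Submodule.subset_span ⟨⟨i, hdiv⟩, rfl⟩)
    · have hc0 : c i = 0 := by
        have h1 := hcoord i
        have h2 : c i * (lamv i - 1) = 0 := by linear_combination h1
        rcases mul_eq_zero.mp h2 with h | h
        · exact h
        · exact absurd (sub_eq_zero.mp h) (eig_ne_one m hm p q (i:ℕ) hdiv)
      rw [hc0, zero_smul]
      exact Submodule.zero_mem _
  · rw [Submodule.span_le]
    rintro _ ⟨i, rfl⟩
    refine Submodule.mem_inf.mpr ⟨fj_mem_Hpq p q _, ?_⟩
    rw [Submodule.mem_iInf]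
    intro g
    rw [Submodule.mem_iInf]
    intro hg
    rw [LinearMap.mem_ker, LinearMap.sub_apply, LinearMap.id_apply, sub_eq_zero,
      AlgHom.toLinearMap_apply]
    exact uAct_zpowers_fj m hm p q _ i.2 g hg

lemma count_card (m p q : ℕ) (hm : 2 ≤ m) (hme : Even m) :
    ((Finset.range (p+q+1)).filter (fun j : ℕ => (m:ℤ) ∣ 2*(j:ℤ) - (p:ℤ) - (q:ℤ))).card
      = if Even (p + q) then 2 * ((p + q) / m) + 1 else 0 := by
  classical
  obtain ⟨r, hr⟩ := hme
  have hr1 : 1 ≤ r := by omega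
  have hmz : (m:ℤ) = 2 * r := by push_cast [hr]; ring
  by_cases hpq : Even (p + q)
  · obtain ⟨s, hs⟩ := hpq
    rw [if_pos ⟨s, hs⟩]
    have hps : (p:ℤ) + q = 2 * s := by push_cast [← hs]; omega
    set d := s / r with hd
    have hdm : (p + q) / m = d := by
      rw [hs, hr, show s + s = 2 * s by ring, show r + r = 2 * r by ring,
        Nat.mul_div_mul_left s r (by omega)]
    have hmod := Nat.div_add_mod s r
    set mo := s % r with hmo
    have hmor : mo < r := Nat.mod_lt _ (by omega)
    have hdr : d * r ≤ s := Nat.div_mul_le_self s r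
    have h9 : (r:ℤ) * d + mo = s := by exact_mod_cast hmod
    have hEq : (Finset.range (p+q+1)).filter (fun j : ℕ => (m:ℤ) ∣ 2*(j:ℤ) - (p:ℤ) - (q:ℤ))
        = (Finset.range (2*d+1)).image (fun t => (s - d*r) + t*r) := by
      ext j
      simp only [Finset.mem_filter, Finset.mem_range, Finset.mem_image]
      constructor
      · rintro ⟨hjlt, t', ht'⟩
        rw [hmz] at ht'
        have hjz : (j:ℤ) = s + r * t' := by
          have hX : (2*(r:ℤ))*t' = 2*(r*t') := by ring
          have hY : (j:ℤ) ≤ 2*s + ((p:ℤ)+q) - 2*s := by linarith [hps]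
          linarith [ht', hps, hX]
        have hjle : (j:ℤ) ≤ 2*s := by
          have : (j:ℕ) < p+q+1 := hjlt
          have : (j:ℤ) < (p:ℤ)+q+1 := by exact_mod_cast this
          linarith
        have hub : t' ≤ (d:ℤ) := by
          by_contra hcon
          push_neg at hcon
          have h7 : (r:ℤ) * ((d:ℤ)+1) ≤ r * t' := by
            apply mul_le_mul_of_nonneg_left (by omega) (by positivity)
          have h8 : (r:ℤ) * ((d:ℤ)+1) = r*d + r := by ring
          linarith
        have hlb : -(d:ℤ) ≤ t' := by
          by_contra hcon
          push_neg at hcon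
          have h7 : (r:ℤ) * t' ≤ r * (-(d:ℤ)-1) := by
            apply mul_le_mul_of_nonneg_left (by omega) (by positivity)
          have h8 : (r:ℤ) * (-(d:ℤ)-1) = -((r:ℤ)*d) - r := by ring
          have h10 : (0:ℤ) ≤ (j:ℤ) := Int.natCast_nonneg j
          linarith
        have htn : ((t' + d).toNat : ℤ) = t' + d := Int.toNat_of_nonneg (by linarith)
        refine ⟨(t' + d).toNat, ?_, ?_⟩
        · omega
        · have hcast : (((s - d*r) + (t'+d).toNat * r : ℕ) : ℤ) = j := by
            push_cast [Nat.cast_sub hdr]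
            rw [htn]
            have hZ : ((t':ℤ)+d)*r = r*t' + r*d := by ring
            have hW : ((d:ℤ))*r = r*d := by ring
            linarith [hjz]
          exact_mod_cast hcast
      · rintro ⟨t, htlt, rfl⟩
        have h12 : t * r ≤ 2*d*r := Nat.mul_le_mul_right r (by omega)
        have h13 : 2*d*r = 2*(d*r) := by ring
        constructor
        · omega
        · refine ⟨(t:ℤ) - d, ?_⟩
          rw [hmz]
          push_cast [Nat.cast_sub hdr]
          linear_combination -hps
    rw [hEq, Finset.card_image_of_injective, Finset.card_range, hdm]
    intro x y hxy
    have hxy' : s - d*r + x*r = s - d*r + y*r := hxy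
    have hxr : x * r = y * r := by omega
    exact Nat.eq_of_mul_eq_mul_right (by omega) hxr
  · rw [if_neg hpq]
    rw [Finset.card_eq_zero, Finset.filter_eq_empty_iff]
    intro j hj
    rintro ⟨t, ht⟩
    rw [Nat.not_even_iff_odd] at hpq
    obtain ⟨u, hu⟩ := hpq
    rw [hmz] at ht
    have hX : (2*(r:ℤ))*t = 2*(r*t) := by ring
    have hY : (p:ℤ) + q = 2*u + 1 := by push_cast [hu]; omega
    omega

end Aux






theorem dim_inv_cyclic_even (m : ℕ) (hm : 2 ≤ m) (hmeven : Even m) (p q : ℕ) :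
    dimHpqInv 2 p q ((Subgroup.zpowers (diagU (2 * Real.pi / m)) : Subgroup _) : Set _) =
      if Even (p + q) then 2 * ((p + q) / m) + 1 else 0 := by
  classical
  rw [dimHpqInv, Aux.HpqInv_eq_span m hm p q]
  have hind : LinearIndependent ℂ
      (fun i : {i : Fin (p+q+1) // (m:ℤ) ∣ 2*((i:ℕ):ℤ) - (p:ℤ) - (q:ℤ)} =>
        Aux.fj p q ((i : Fin (p+q+1)) : ℕ)) :=
    (Aux.fj_linearIndependent p q).comp _ Subtype.val_injective
  rw [finrank_span_eq_card hind, Fintype.card_subtype]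
  have hcard : (Finset.univ.filter
        (fun i : Fin (p+q+1) => (m:ℤ) ∣ 2*((i:ℕ):ℤ) - (p:ℤ) - (q:ℤ))).card
      = ((Finset.range (p+q+1)).filter
        (fun j : ℕ => (m:ℤ) ∣ 2*(j:ℤ) - (p:ℤ) - (q:ℤ))).card := by
    rw [Finset.card_filter, Finset.card_filter]
    exact Fin.sum_univ_eq_sum_range
      (fun j : ℕ => if (m:ℤ) ∣ 2*(j:ℤ) - (p:ℤ) - (q:ℤ) then 1 else 0) (p+q+1)
  rw [hcard, Aux.count_card m p q hm hmeven]
end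
end

section
/- Let n ≥ 2 and let G ⊆ U(n) be a finite subgroup acting freely on S^{2n−1}. Define C_G = sup { √(1 + (p+q)(p+q+2n−2)) / (2q(p+n−1)) : p ≥ 0, q ≥ 1 natural numbers with H_{p,q}^G ≠ {0} }. Then C_G > 1/(2(n−1)). Moreover, if G is cyclic, then C_G ≥ √(1+4n)/(2n). -/
noncomputable section

open MvPolynomial Matrix Complex Real Filter

/-- The optimal constant `C_G` in the one-derivative Sobolev estimate. -/
def CG (n : ℕ) (G : Subgroup (Matrix.unitaryGroup (Fin n) ℂ)) : ℝ :=
  sSup {x : ℝ | ∃ p q : ℕ, 1 ≤ q ∧ HpqInv n p q (G : Set _) ≠ ⊥ ∧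
    x = Real.sqrt (1 + ((p : ℝ) + q) * ((p : ℝ) + q + 2 * n - 2)) /
      (2 * q * ((p : ℝ) + n - 1))}

namespace CGaux
open Matrix

variable {n : ℕ}

def lrow [NeZero n] (u : Matrix (Fin n) (Fin n) ℂ) : MvPolynomial (Fin n) ℂ :=
  ∑ j, MvPolynomial.C ((starRingEnd ℂ) (u 0 j)) * X j

def lbarV (n : ℕ) [NeZero n] (u : Matrix (Fin n) (Fin n) ℂ) : MvPolynomial (Var n) ℂ :=
  ∑ j, MvPolynomial.C ((starRingEnd ℂ) (u 0 j)) * X (Sum.inr j)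

lemma lbarV_eq_rename [NeZero n] (u : Matrix (Fin n) (Fin n) ℂ) :
    lbarV n u = rename Sum.inr (lrow u) := by
  simp [lbarV, lrow]

lemma uAct_X_inr (g : Matrix.unitaryGroup (Fin n) ℂ) (i : Fin n) :
    uAct n g (X (Sum.inr i)) = ∑ j, MvPolynomial.C ((starRingEnd ℂ)
      ((g⁻¹ : Matrix.unitaryGroup (Fin n) ℂ) i j)) * X (Sum.inr j) := by
  simp [uAct]

lemma uAct_X_inl (g : Matrix.unitaryGroup (Fin n) ℂ) (i : Fin n) :
    uAct n g (X (Sum.inl i)) = ∑ j, MvPolynomial.C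
      ((g⁻¹ : Matrix.unitaryGroup (Fin n) ℂ) i j) * X (Sum.inl j) := by
  simp [uAct]

lemma uAct_lbarV [NeZero n] (g : Matrix.unitaryGroup (Fin n) ℂ)
    (u : Matrix (Fin n) (Fin n) ℂ) :
    uAct n g (lbarV n u) = lbarV n (u * (g⁻¹ : Matrix.unitaryGroup (Fin n) ℂ)) := by
  simp only [lbarV, map_sum, _root_.map_mul, algHom_C, uAct_X_inr, Matrix.mul_apply,
    Finset.mul_sum, Finset.sum_mul]
  rw [Finset.sum_comm]
  refine Finset.sum_congr rfl fun j _ => Finset.sum_congr rfl fun i _ => ?_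
  simp [mul_assoc]

end CGaux
namespace CGaux2
open Matrix CGaux

variable {n : ℕ} [NeZero n]

variable (G : Subgroup (Matrix.unitaryGroup (Fin n) ℂ)) [Fintype G]

def f0 (n : ℕ) [NeZero n] (G : Subgroup (Matrix.unitaryGroup (Fin n) ℂ)) [Fintype G] :
    MvPolynomial (Var n) ℂ :=
  ∏ h : G, lbarV n ((h : Matrix.unitaryGroup (Fin n) ℂ) : Matrix (Fin n) (Fin n) ℂ)

lemma uAct_f0 (g : Matrix.unitaryGroup (Fin n) ℂ) (hg : g ∈ G) :
    uAct n g (f0 n G) = f0 n G := by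
  rw [f0, map_prod]
  simp only [uAct_lbarV]
  exact Fintype.prod_equiv (Equiv.mulRight (⟨g, hg⟩ : G)⁻¹) _ _ fun h => rfl

omit [NeZero n] in
lemma pderiv_inl_rename_inr (i : Fin n) (q : MvPolynomial (Fin n) ℂ) :
    pderiv (R := ℂ) (Sum.inl i) (rename Sum.inr q) = 0 := by
  induction q using MvPolynomial.induction_on with
  | C a => simp
  | add p q hp hq => simp [hp, hq]
  | mul_X p j hp => simp [pderiv_mul, hp, pderiv_X_of_ne (by simp : (Sum.inl i : Var n) ≠ Sum.inr j)]

lemma f0_harmonic : kohnLap n (f0 n G) = 0 := by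
  have h : f0 n G = rename Sum.inr (∏ h : G, lrow ((h : Matrix.unitaryGroup (Fin n) ℂ) :
      Matrix (Fin n) (Fin n) ℂ)) := by
    rw [map_prod]; exact Finset.prod_congr rfl fun h _ => lbarV_eq_rename _
  rw [h, kohnLap]
  simp only [LinearMap.sum_apply, LinearMap.coe_comp, Function.comp_apply,
    Derivation.coeFn_coe]
  rw [Finset.sum_congr rfl fun i _ => ?_, Finset.sum_const_zero]
  rw [pderiv_rename Sum.inr_injective, pderiv_inl_rename_inr]

lemma lbarV_mem (u : Matrix (Fin n) (Fin n) ℂ) :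
    lbarV n u ∈ weightedHomogeneousSubmodule ℂ (bidegWt n) (0, 1) := by
  refine Submodule.sum_mem _ fun j _ => ?_
  rw [C_mul']
  exact Submodule.smul_mem _ _ (isWeightedHomogeneous_X ℂ (bidegWt n) (Sum.inr j))

lemma f0_homog :
    f0 n G ∈ weightedHomogeneousSubmodule ℂ (bidegWt n) (0, Fintype.card G) := by
  rw [mem_weightedHomogeneousSubmodule]
  have h := IsWeightedHomogeneous.prod Finset.univ
    (fun h : G => lbarV n ((h : Matrix.unitaryGroup (Fin n) ℂ) : Matrix (Fin n) (Fin n) ℂ))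
    (fun _ => ((0 : ℕ), (1 : ℕ))) (w := bidegWt n) (fun h _ => lbarV_mem _)
  have e : (∑ _h : G, ((0 : ℕ), (1 : ℕ))) = ((0 : ℕ), Fintype.card G) := by
    rw [Finset.sum_const, Finset.card_univ, Prod.smul_mk, smul_eq_mul, smul_eq_mul,
      mul_zero, mul_one]
  rwa [e] at h

lemma lrow_ne_zero (u : Matrix.unitaryGroup (Fin n) ℂ) :
    lrow ((u : Matrix (Fin n) (Fin n) ℂ)) ≠ 0 := by
  intro h
  have h2 : ((u : Matrix (Fin n) (Fin n) ℂ) * star (u : Matrix (Fin n) (Fin n) ℂ)) 0 0 = 1 := by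
    rw [Matrix.mem_unitaryGroup_iff.mp u.2, Matrix.one_apply_eq]
  have h1 : aeval (fun j => (u : Matrix (Fin n) (Fin n) ℂ) 0 j)
      (lrow ((u : Matrix (Fin n) (Fin n) ℂ))) = 1 := by
    rw [← h2]
    simp [lrow, Matrix.mul_apply, Matrix.conjTranspose_apply, mul_comm]
  rw [h, map_zero] at h1
  exact zero_ne_one h1

lemma f0_ne_zero : f0 n G ≠ 0 := by
  have h : f0 n G = rename Sum.inr (∏ h : G, lrow ((h : Matrix.unitaryGroup (Fin n) ℂ) :
      Matrix (Fin n) (Fin n) ℂ)) := by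
    rw [map_prod]; exact Finset.prod_congr rfl fun h _ => lbarV_eq_rename _
  rw [h]
  intro hc
  have : (∏ h : G, lrow ((h : Matrix.unitaryGroup (Fin n) ℂ) :
      Matrix (Fin n) (Fin n) ℂ)) = 0 :=
    rename_injective _ Sum.inr_injective (by rw [hc, map_zero])
  obtain ⟨h1, -, hz⟩ := Finset.prod_eq_zero_iff.mp this
  exact lrow_ne_zero _ hz

lemma f0_mem_HpqInv : f0 n G ∈ HpqInv n 0 (Fintype.card G) (G : Set _) := by
  refine Submodule.mem_inf.mpr ⟨Submodule.mem_inf.mpr ⟨f0_homog G, ?_⟩, ?_⟩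
  · exact LinearMap.mem_ker.mpr (f0_harmonic G)
  · refine Submodule.mem_iInf _ |>.mpr fun g => Submodule.mem_iInf _ |>.mpr fun hg => ?_
    rw [LinearMap.mem_ker, LinearMap.sub_apply, AlgHom.toLinearMap_apply, LinearMap.id_apply,
      sub_eq_zero]
    exact uAct_f0 G g hg

lemma HpqInv_card_ne_bot : HpqInv n 0 (Fintype.card G) (G : Set _) ≠ ⊥ :=
  Submodule.ne_bot_iff _ |>.mpr ⟨f0 n G, f0_mem_HpqInv G, f0_ne_zero G⟩

end CGaux2
namespace CGaux3
open Matrix CGaux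

variable {n : ℕ}

lemma sum_perm4 {M α : Type*} [AddCommMonoid M] [Fintype α]
    (c : α → α → α → α → M) :
    (∑ i, ∑ j, ∑ k, ∑ l, c i j k l) = ∑ l, ∑ k, ∑ j, ∑ i, c i j k l := by
  have s3 : ∀ (d : α → α → α → M),
      (∑ i, ∑ j, ∑ k, d i j k) = ∑ k, ∑ j, ∑ i, d i j k := fun d => by
    rw [Finset.sum_congr rfl fun i _ => Finset.sum_comm, Finset.sum_comm,
      Finset.sum_congr rfl fun k _ => Finset.sum_comm]
  calc (∑ i, ∑ j, ∑ k, ∑ l, c i j k l)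
      = ∑ i, ∑ l, ∑ k, ∑ j, c i j k l := Finset.sum_congr rfl fun i _ => s3 _
    _ = ∑ l, ∑ i, ∑ k, ∑ j, c i j k l := Finset.sum_comm
    _ = ∑ l, ∑ k, ∑ i, ∑ j, c i j k l := Finset.sum_congr rfl fun l _ => Finset.sum_comm
    _ = ∑ l, ∑ k, ∑ j, ∑ i, c i j k l :=
        Finset.sum_congr rfl fun l _ => Finset.sum_congr rfl fun k _ => Finset.sum_comm

def quadV (n : ℕ) (A : Matrix (Fin n) (Fin n) ℂ) : MvPolynomial (Var n) ℂ :=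
  ∑ i, ∑ j, MvPolynomial.C (A i j) * (X (Sum.inr i) * X (Sum.inl j))

lemma uAct_quadV (g : Matrix.unitaryGroup (Fin n) ℂ) (A : Matrix (Fin n) (Fin n) ℂ) :
    uAct n g (quadV n A) = quadV n (star ((g⁻¹ : Matrix.unitaryGroup (Fin n) ℂ) :
      Matrix (Fin n) (Fin n) ℂ) * A * ((g⁻¹ : Matrix.unitaryGroup (Fin n) ℂ) :
      Matrix (Fin n) (Fin n) ℂ)) := by
  simp only [quadV, map_sum, _root_.map_mul, algHom_C, uAct_X_inr, uAct_X_inl,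
    Matrix.mul_apply, Matrix.conjTranspose_apply, map_sum, Finset.mul_sum, Finset.sum_mul]
  rw [sum_perm4]
  refine Finset.sum_congr rfl fun k _ => Finset.sum_congr rfl fun l _ =>
    Finset.sum_congr rfl fun j _ => Finset.sum_congr rfl fun i _ => ?_
  simp only [Matrix.star_apply, MvPolynomial.algebraMap_eq, RingHom.coe_coe]
  rw [show star ((g⁻¹ : Matrix.unitaryGroup (Fin n) ℂ) i k) =
    (starRingEnd ℂ) ((g⁻¹ : Matrix.unitaryGroup (Fin n) ℂ) i k) from rfl]
  ring

end CGaux3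

namespace CGaux3b
open Matrix CGaux CGaux3

variable {n : ℕ}

lemma uAct_quadV_of_commute (g : Matrix.unitaryGroup (Fin n) ℂ)
    (A : Matrix (Fin n) (Fin n) ℂ) (hc : Commute A (g : Matrix (Fin n) (Fin n) ℂ)) :
    uAct n g (quadV n A) = quadV n A := by
  rw [uAct_quadV]
  congr 1
  rw [Matrix.UnitaryGroup.inv_val, star_star, ← hc.eq, mul_assoc,
    Matrix.mem_unitaryGroup_iff.mp g.2, mul_one]

lemma quadV_harmonic (A : Matrix (Fin n) (Fin n) ℂ) (hA : Matrix.trace A = 0) :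
    kohnLap n (quadV n A) = 0 := by
  rw [kohnLap]
  simp only [LinearMap.sum_apply, LinearMap.coe_comp, Function.comp_apply,
    Derivation.coeFn_coe, quadV, map_sum, pderiv_C_mul, pderiv_mul, pderiv_X,
    Pi.single_apply, Sum.inr.injEq, Sum.inl.injEq, pderiv_C, zero_mul, mul_zero, add_zero,
    zero_add, mul_ite, ite_mul, one_mul, mul_one, reduceCtorEq, if_false,
    Finset.sum_ite_eq', Finset.mem_univ, if_true, apply_ite]
  simp only [map_zero]
  rw [Finset.sum_congr rfl fun x _ => Finset.sum_congr rfl fun x1 _ =>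
    Finset.sum_ite_eq Finset.univ x (fun x2 => if x1 = x2 then MvPolynomial.C (A x x1) else 0)]
  simp only [Finset.mem_univ, if_true]
  rw [Finset.sum_congr rfl fun x _ => Finset.sum_ite_eq' Finset.univ x
    (fun x1 => MvPolynomial.C (A x x1))]
  simp only [Finset.mem_univ, if_true, ← map_sum]
  rw [show (∑ x, A x x) = Matrix.trace A from rfl, hA, map_zero]

lemma quadV_homog (A : Matrix (Fin n) (Fin n) ℂ) :
    quadV n A ∈ weightedHomogeneousSubmodule ℂ (bidegWt n) (1, 1) := by
  refine Submodule.sum_mem _ fun i _ => Submodule.sum_mem _ fun j _ => ?_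
  rw [C_mul']
  refine Submodule.smul_mem _ _ ?_
  rw [mem_weightedHomogeneousSubmodule]
  have h := (isWeightedHomogeneous_X ℂ (bidegWt n) (Sum.inr i)).mul
    (isWeightedHomogeneous_X ℂ (bidegWt n) (Sum.inl j))
  convert h using 2
  all_goals simp [bidegWt]

lemma quadV_ne_zero (A : Matrix (Fin n) (Fin n) ℂ) (hA : A ≠ 0) : quadV n A ≠ 0 := by
  have hex : ∃ i j, A i j ≠ 0 := by
    by_contra h
    push_neg at h
    exact hA (Matrix.ext fun i j => h i j)
  obtain ⟨i0, j0, h0⟩ := hex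
  intro h
  have h2 := congrArg (aeval (R := ℂ) (Sum.elim (fun j => if j = j0 then (1 : ℂ) else 0)
    (fun i => if i = i0 then (1 : ℂ) else 0))) h
  rw [map_zero, quadV] at h2
  simp only [map_sum, _root_.map_mul, aeval_C, aeval_X, Sum.elim_inr, Sum.elim_inl,
    Algebra.algebraMap_self, RingHom.id_apply, mul_ite, ite_mul, mul_one, mul_zero, one_mul,
    zero_mul, Finset.sum_ite_eq', Finset.mem_univ, if_true] at h2
  exact h0 h2

end CGaux3b
namespace CGaux4
open Matrix CGaux CGaux3 CGaux3b

variable {n : ℕ}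

lemma HpqInv_11_ne_bot (G : Subgroup (Matrix.unitaryGroup (Fin n) ℂ))
    (A : Matrix (Fin n) (Fin n) ℂ) (htr : Matrix.trace A = 0) (hA : A ≠ 0)
    (hcomm : ∀ g ∈ G, Commute A ((g : Matrix.unitaryGroup (Fin n) ℂ) :
      Matrix (Fin n) (Fin n) ℂ)) :
    HpqInv n 1 1 (G : Set _) ≠ ⊥ := by
  refine Submodule.ne_bot_iff _ |>.mpr ⟨quadV n A, ?_, quadV_ne_zero A hA⟩
  refine Submodule.mem_inf.mpr ⟨Submodule.mem_inf.mpr ⟨quadV_homog A,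
    LinearMap.mem_ker.mpr (quadV_harmonic A htr)⟩, ?_⟩
  refine Submodule.mem_iInf _ |>.mpr fun g => Submodule.mem_iInf _ |>.mpr fun hg => ?_
  rw [LinearMap.mem_ker, LinearMap.sub_apply, AlgHom.toLinearMap_apply, LinearMap.id_apply,
    sub_eq_zero]
  exact uAct_quadV_of_commute g A (hcomm g hg)

lemma exists_good_matrix (hn : 2 ≤ n) (G : Subgroup (Matrix.unitaryGroup (Fin n) ℂ))
    [Finite G] (hcyc : IsCyclic G) :
    ∃ A : Matrix (Fin n) (Fin n) ℂ, Matrix.trace A = 0 ∧ A ≠ 0 ∧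
      ∀ g ∈ G, Commute A ((g : Matrix.unitaryGroup (Fin n) ℂ) :
        Matrix (Fin n) (Fin n) ℂ) := by
  obtain ⟨g0, hg0⟩ := hcyc.exists_generator
  set M : Matrix (Fin n) (Fin n) ℂ :=
    ((g0 : Matrix.unitaryGroup (Fin n) ℂ) : Matrix (Fin n) (Fin n) ℂ) with hM
  -- once we have a candidate commuting with M, it commutes with everything in G
  have key : ∀ A : Matrix (Fin n) (Fin n) ℂ, Commute A M →
      ∀ g ∈ G, Commute A ((g : Matrix.unitaryGroup (Fin n) ℂ) :
        Matrix (Fin n) (Fin n) ℂ) := by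
    intro A hAM g hg
    obtain ⟨k, hk⟩ := mem_powers_iff_mem_zpowers.mpr (hg0 ⟨g, hg⟩)
    have h1 : ((((g0 ^ k : G) : Matrix.unitaryGroup (Fin n) ℂ)) :
        Matrix (Fin n) (Fin n) ℂ) = (g : Matrix (Fin n) (Fin n) ℂ) :=
      congrArg (fun x : G => ((x : Matrix.unitaryGroup (Fin n) ℂ) :
        Matrix (Fin n) (Fin n) ℂ)) hk
    have hcoe : (g : Matrix (Fin n) (Fin n) ℂ) = M ^ k := by
      rw [← h1]
      push_cast
      rfl
    rw [hcoe]
    exact hAM.pow_right k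
  by_cases hsc : ∃ c : ℂ, M = c • (1 : Matrix (Fin n) (Fin n) ℂ)
  · obtain ⟨c, hc⟩ := hsc
    have h01 : (⟨0, by omega⟩ : Fin n) ≠ ⟨1, by omega⟩ := by
      intro h; simpa using congrArg Fin.val h
    refine ⟨Matrix.single ⟨0, by omega⟩ ⟨0, by omega⟩ 1 -
      Matrix.single ⟨1, by omega⟩ ⟨1, by omega⟩ 1, ?_, ?_, ?_⟩
    · rw [Matrix.trace_sub, Matrix.trace_single_eq_same, Matrix.trace_single_eq_same,
        sub_self]
    · intro h
      have h2 := congrFun (congrFun h ⟨0, by omega⟩) ⟨0, by omega⟩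
      rw [Matrix.sub_apply, Matrix.single_apply_same,
        Matrix.single_apply_of_ne, Matrix.zero_apply, sub_zero] at h2
      · exact one_ne_zero h2
      · intro hc'
        exact h01 hc'.1.symm
    · refine key _ ?_
      rw [hc]
      unfold Commute SemiconjBy
      rw [mul_smul_comm, smul_mul_assoc, mul_one, one_mul]
  · refine ⟨M - (Matrix.trace M / n) • 1, ?_, ?_, key _ ?_⟩
    · rw [Matrix.trace_sub, Matrix.trace_smul, Matrix.trace_one, Fintype.card_fin, smul_eq_mul]
      have hn0 : (n : ℂ) ≠ 0 := Nat.cast_ne_zero.mpr (by omega)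
      field_simp
      ring
    · intro h
      exact hsc ⟨Matrix.trace M / n, by rwa [sub_eq_zero] at h⟩
    · exact (Commute.refl M).sub_left (by
        unfold Commute SemiconjBy
        rw [mul_smul_comm, smul_mul_assoc, mul_one, one_mul])

end CGaux4
section MainProof
open CGaux CGaux2 CGaux3 CGaux3b CGaux4

theorem CG_bounds (n : ℕ) (hn : 2 ≤ n)
    (G : Subgroup (Matrix.unitaryGroup (Fin n) ℂ))
    (hGfin : Finite G) (hGfree : actsFreely (G : Set (Matrix.unitaryGroup (Fin n) ℂ))) :
    1 / (2 * ((n : ℝ) - 1)) < CG n G ∧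
    (IsCyclic G → Real.sqrt (1 + 4 * n) / (2 * n) ≤ CG n G) := by
  haveI : NeZero n := ⟨by omega⟩
  haveI : Fintype G := Fintype.ofFinite G
  have hN : (2 : ℝ) ≤ (n : ℝ) := by exact_mod_cast hn
  set S : Set ℝ := {x : ℝ | ∃ p q : ℕ, 1 ≤ q ∧ HpqInv n p q (G : Set _) ≠ ⊥ ∧
    x = Real.sqrt (1 + ((p : ℝ) + q) * ((p : ℝ) + q + 2 * n - 2)) /
      (2 * q * ((p : ℝ) + n - 1))} with hSdef
  have hCG : CG n G = sSup S := rfl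
  have hbdd : BddAbove S := by
    refine ⟨1, fun x hx => ?_⟩
    obtain ⟨p, q, hq, -, rfl⟩ := hx
    have ha : (0 : ℝ) ≤ (p : ℝ) := Nat.cast_nonneg p
    have hb : (1 : ℝ) ≤ (q : ℝ) := by exact_mod_cast hq
    have hd : (0 : ℝ) < 2 * (q : ℝ) * ((p : ℝ) + n - 1) := by nlinarith
    have hnum : Real.sqrt (1 + ((p : ℝ) + q) * ((p : ℝ) + q + 2 * n - 2)) ≤
        (p : ℝ) + q + n - 1 := by
      rw [show (p : ℝ) + q + n - 1 = Real.sqrt (((p : ℝ) + q + n - 1) ^ 2) from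
        (Real.sqrt_sq (by nlinarith)).symm]
      apply Real.sqrt_le_sqrt
      nlinarith
    rw [div_le_one hd]
    nlinarith
  constructor
  · set m := Fintype.card G with hm
    have hm1 : 1 ≤ m := Fintype.card_pos
    have hb : (1 : ℝ) ≤ (m : ℝ) := by exact_mod_cast hm1
    have hmem : Real.sqrt (1 + (m : ℝ) * ((m : ℝ) + 2 * n - 2)) /
        (2 * (m : ℝ) * ((n : ℝ) - 1)) ∈ S := by
      refine ⟨0, m, hm1, HpqInv_card_ne_bot G, ?_⟩
      push_cast
      ring_nf
    have hs : (m : ℝ) < Real.sqrt (1 + (m : ℝ) * ((m : ℝ) + 2 * n - 2)) := by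
      rw [Real.lt_sqrt (by positivity)]
      nlinarith
    have hlt : 1 / (2 * ((n : ℝ) - 1)) <
        Real.sqrt (1 + (m : ℝ) * ((m : ℝ) + 2 * n - 2)) / (2 * (m : ℝ) * ((n : ℝ) - 1)) := by
      rw [div_lt_div_iff₀ (by nlinarith) (by nlinarith)]
      nlinarith [mul_lt_mul_of_pos_right hs (show (0 : ℝ) < 2 * ((n : ℝ) - 1) by nlinarith)]
    exact lt_of_lt_of_le hlt (le_csSup hbdd hmem)
  · intro hcyc
    obtain ⟨A, htr, hA, hcomm⟩ := exists_good_matrix hn G hcyc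
    have hne : HpqInv n 1 1 (G : Set _) ≠ ⊥ := HpqInv_11_ne_bot G A htr hA hcomm
    have hmem : Real.sqrt (1 + 4 * (n : ℝ)) / (2 * (n : ℝ)) ∈ S := by
      refine ⟨1, 1, le_refl 1, hne, ?_⟩
      push_cast
      rw [show (1 : ℝ) + (1 + 1) * (1 + 1 + 2 * (n : ℝ) - 2) = 1 + 4 * n by ring]
      ring_nf
    exact le_csSup hbdd hmem

end MainProof
end
end
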